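/- There exist bipartite pure states |ψ⟩ and |φ⟩ of two qutrits such that E(|ψ⟩) ≥ E(|φ⟩) but E_N(|ψ⟩) < E_N(|φ⟩). Concretely, with |Ψ(α,β)⟩ = sin α cos β |00⟩ + cos α cos β |11⟩ + sin β |22⟩, the states with (α,β) = (1.3, 0.75) and (0.7, 1) provide such an example. -/
import Mathlib


open Real

/-- Entanglement entropy of a bipartite pure state with squared Schmidt coefficients `c`:
`E = -∑ c_i log₂ c_i`. -/
noncomputable def Epure (c : Fin 3 → ℝ) : ℝ := ∑ i, -(c i) * Real.logb 2 (c i)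

/-- Logarithmic negativity of a bipartite pure state with squared Schmidt coefficients `c`:
`E_N = 2 log₂ (∑ √c_i)`. -/
noncomputable def ENpure (c : Fin 3 → ℝ) : ℝ := 2 * Real.logb 2 (∑ i, Real.sqrt (c i))

/-- Squared Schmidt coefficients of the two-qutrit state
`|Ψ(α,β)⟩ = sin α cos β |00⟩ + cos α cos β |11⟩ + sin β |22⟩`. -/
noncomputable def schmidtSq (α β : ℝ) : Fin 3 → ℝ :=
  ![(Real.sin α * Real.cos β) ^ 2, (Real.cos α * Real.cos β) ^ 2, (Real.sin β) ^ 2]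

lemma term_lb {c l u R : ℝ} (h0 : 0 < l) (hl : l ≤ c) (hu : c ≤ u) (hR : Real.log u ≤ R)
    (hR0 : R ≤ 0) : -(l*R) / 0.6931471808 ≤ -c * Real.logb 2 c := by
  have hc0 : 0 < c := lt_of_lt_of_le h0 hl
  have hu0 : 0 < u := lt_of_lt_of_le hc0 hu
  have hlog : Real.log c ≤ R := le_trans ((Real.log_le_log_iff hc0 hu0).2 hu) hR
  have h2l : (0.6931471803:ℝ) < Real.log 2 := Real.log_two_gt_d9
  have h2u : Real.log 2 < 0.6931471808 := Real.log_two_lt_d9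
  rw [Real.logb, show -c * (Real.log c / Real.log 2) = (c * -Real.log c) / Real.log 2 by ring,
    show -(l*R) = l * (-R) by ring]
  have key : l * (-R) ≤ c * (-Real.log c) := mul_le_mul hl (by linarith) (by linarith) hc0.le
  have hnn : (0:ℝ) ≤ l * (-R) := mul_nonneg h0.le (by linarith)
  rw [div_le_div_iff₀ (by norm_num) (by linarith)]
  nlinarith [key, hnn]

lemma term_ub {c l u r : ℝ} (h0 : 0 < l) (hl : l ≤ c) (hu : c ≤ u) (hu1 : u ≤ 1)
    (hr : r ≤ Real.log l) (_hr0 : r ≤ 0) : -c * Real.logb 2 c ≤ -(u*r) / 0.6931471803 := by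
  have hc0 : 0 < c := lt_of_lt_of_le h0 hl
  have hlog : r ≤ Real.log c := le_trans hr ((Real.log_le_log_iff h0 hc0).2 hl)
  have hlc0 : Real.log c ≤ 0 := Real.log_nonpos hc0.le (le_trans hu hu1)
  have h2l : (0.6931471803:ℝ) < Real.log 2 := Real.log_two_gt_d9
  have h2u : Real.log 2 < 0.6931471808 := Real.log_two_lt_d9
  rw [Real.logb, show -c * (Real.log c / Real.log 2) = (c * -Real.log c) / Real.log 2 by ring,
    show -(u*r) = u * (-r) by ring]
  have key : c * (-Real.log c) ≤ u * (-r) := mul_le_mul hu (by linarith) (by linarith) (by linarith)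
  rw [div_le_div_iff₀ (by linarith) (by norm_num)]
  nlinarith [key, mul_nonneg (by linarith : (0:ℝ) ≤ c) (by linarith : (0:ℝ) ≤ -Real.log c)]

lemma Bs_13_80 : (0.161748513:ℝ) ≤ Real.sin (13/80) ∧ Real.sin (13/80) ≤ 0.161821148 := by
  have hs := Real.sin_bound (x := 13/80) (by rw [abs_le]; norm_num)
  rw [abs_le, show |(13/80:ℝ)| = 13/80 from abs_of_pos (by norm_num)] at hs
  norm_num at hs
  constructor <;> linarith [hs.1, hs.2]

lemma Bc_13_80 : (0.986760557:ℝ) ≤ Real.cos (13/80) ∧ Real.cos (13/80) ≤ 0.986833193 := by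
  have hs := Real.cos_bound (x := 13/80) (by rw [abs_le]; norm_num)
  rw [abs_le, show |(13/80:ℝ)| = 13/80 from abs_of_pos (by norm_num)] at hs
  norm_num at hs
  constructor <;> linarith [hs.1, hs.2]

lemma Bs_3_32 : (0.093608647:ℝ) ≤ Real.sin (3/32) ∧ Real.sin (3/32) ≤ 0.093616695 := by
  have hs := Real.sin_bound (x := 3/32) (by rw [abs_le]; norm_num)
  rw [abs_le, show |(3/32:ℝ)| = 3/32 from abs_of_pos (by norm_num)] at hs
  norm_num at hs
  constructor <;> linarith [hs.1, hs.2]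

lemma Bc_3_32 : (0.995601445:ℝ) ≤ Real.cos (3/32) ∧ Real.cos (3/32) ≤ 0.995609493 := by
  have hs := Real.cos_bound (x := 3/32) (by rw [abs_le]; norm_num)
  rw [abs_le, show |(3/32:ℝ)| = 3/32 from abs_of_pos (by norm_num)] at hs
  norm_num at hs
  constructor <;> linarith [hs.1, hs.2]

lemma Bs_7_80 : (0.087385293:ℝ) ≤ Real.sin (7/80) ∧ Real.sin (7/80) ≤ 0.087391400 := by
  have hs := Real.sin_bound (x := 7/80) (by rw [abs_le]; norm_num)
  rw [abs_le, show |(7/80:ℝ)| = 7/80 from abs_of_pos (by norm_num)] at hs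
  norm_num at hs
  constructor <;> linarith [hs.1, hs.2]

lemma Bc_7_80 : (0.996168821:ℝ) ≤ Real.cos (7/80) ∧ Real.cos (7/80) ≤ 0.996174929 := by
  have hs := Real.cos_bound (x := 7/80) (by rw [abs_le]; norm_num)
  rw [abs_le, show |(7/80:ℝ)| = 7/80 from abs_of_pos (by norm_num)] at hs
  norm_num at hs
  constructor <;> linarith [hs.1, hs.2]

lemma Bs_1_8 : (0.124661763:ℝ) ≤ Real.sin (1/8) ∧ Real.sin (1/8) ≤ 0.124687195 := by
  have hs := Real.sin_bound (x := 1/8) (by rw [abs_le]; norm_num)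
  rw [abs_le, show |(1/8:ℝ)| = 1/8 from abs_of_pos (by norm_num)] at hs
  norm_num at hs
  constructor <;> linarith [hs.1, hs.2]

lemma Bc_1_8 : (0.992174784:ℝ) ≤ Real.cos (1/8) ∧ Real.cos (1/8) ≤ 0.992200216 := by
  have hs := Real.cos_bound (x := 1/8) (by rw [abs_le]; norm_num)
  rw [abs_le, show |(1/8:ℝ)| = 1/8 from abs_of_pos (by norm_num)] at hs
  norm_num at hs
  constructor <;> linarith [hs.1, hs.2]

lemma Bs_13_40 : (0.319214105:ℝ) ≤ Real.sin (13/40) ∧ Real.sin (13/40) ≤ 0.319380961 := by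
  have e := Real.sin_two_mul (13/80); norm_num at e; rw [e]
  obtain ⟨a1,a2⟩ := Bs_13_80; obtain ⟨b1,b2⟩ := Bc_13_80
  constructor <;> nlinarith [a1,a2,b1,b2]

lemma Bc_13_40 : (0.947392793:ℝ) ≤ Real.cos (13/40) ∧ Real.cos (13/40) ≤ 0.947679502 := by
  have e := Real.cos_two_mul (13/80); norm_num at e; rw [e]
  obtain ⟨b1,b2⟩ := Bc_13_80
  constructor <;> nlinarith [b1,b2]

lemma Bs_13_20 : (0.604842285:ℝ) ≤ Real.sin (13/20) ∧ Real.sin (13/20) ≤ 0.605341581 := by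
  have e := Real.sin_two_mul (13/40); norm_num at e; rw [e]
  obtain ⟨a1,a2⟩ := Bs_13_40; obtain ⟨b1,b2⟩ := Bc_13_40
  constructor <;> nlinarith [a1,a2,b1,b2]

lemma Bc_13_20 : (0.795106208:ℝ) ≤ Real.cos (13/20) ∧ Real.cos (13/20) ≤ 0.796192878 := by
  have e := Real.cos_two_mul (13/40); norm_num at e; rw [e]
  obtain ⟨b1,b2⟩ := Bc_13_40
  constructor <;> nlinarith [b1,b2]

lemma Bs_13_10 : (0.961827711:ℝ) ≤ Real.sin (13/10) ∧ Real.sin (13/10) ≤ 0.963937312 := by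
  have e := Real.sin_two_mul (13/20); norm_num at e; rw [e]
  obtain ⟨a1,a2⟩ := Bs_13_20; obtain ⟨b1,b2⟩ := Bc_13_20
  constructor <;> nlinarith [a1,a2,b1,b2]

lemma Bc_13_10 : (0.264387764:ℝ) ≤ Real.cos (13/10) ∧ Real.cos (13/10) ≤ 0.267846198 := by
  have e := Real.cos_two_mul (13/20); norm_num at e; rw [e]
  obtain ⟨b1,b2⟩ := Bc_13_20
  constructor <;> nlinarith [b1,b2]

lemma Bs_3_16 : (0.186393808:ℝ) ≤ Real.sin (3/16) ∧ Real.sin (3/16) ≤ 0.186411341 := by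
  have e := Real.sin_two_mul (3/32); norm_num at e; rw [e]
  obtain ⟨a1,a2⟩ := Bs_3_32; obtain ⟨b1,b2⟩ := Bc_3_32
  constructor <;> nlinarith [a1,a2,b1,b2]

lemma Bc_3_16 : (0.982444474:ℝ) ≤ Real.cos (3/16) ∧ Real.cos (3/16) ≤ 0.982476526 := by
  have e := Real.cos_two_mul (3/32); norm_num at e; rw [e]
  obtain ⟨b1,b2⟩ := Bc_3_32
  constructor <;> nlinarith [b1,b2]

lemma Bs_3_8 : (0.366243133:ℝ) ≤ Real.sin (3/8) ∧ Real.sin (3/8) ≤ 0.366289534 := by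
  have e := Real.sin_two_mul (3/16); norm_num at e; rw [e]
  obtain ⟨a1,a2⟩ := Bs_3_16; obtain ⟨b1,b2⟩ := Bc_3_16
  constructor <;> nlinarith [a1,a2,b1,b2]

lemma Bc_3_8 : (0.930394288:ℝ) ≤ Real.cos (3/8) ∧ Real.cos (3/8) ≤ 0.930520249 := by
  have e := Real.cos_two_mul (3/16); norm_num at e; rw [e]
  obtain ⟨b1,b2⟩ := Bc_3_16
  constructor <;> nlinarith [b1,b2]

lemma Bs_3_4 : (0.681501037:ℝ) ≤ Real.sin (3/4) ∧ Real.sin (3/4) ≤ 0.681679657 := by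
  have e := Real.sin_two_mul (3/8); norm_num at e; rw [e]
  obtain ⟨a1,a2⟩ := Bs_3_8; obtain ⟨b1,b2⟩ := Bc_3_8
  constructor <;> nlinarith [a1,a2,b1,b2]

lemma Bc_3_4 : (0.731267062:ℝ) ≤ Real.cos (3/4) ∧ Real.cos (3/4) ≤ 0.731735868 := by
  have e := Real.cos_two_mul (3/8); norm_num at e; rw [e]
  obtain ⟨b1,b2⟩ := Bc_3_8
  constructor <;> nlinarith [b1,b2]

lemma Bs_7_40 : (0.174101008:ℝ) ≤ Real.sin (7/40) ∧ Real.sin (7/40) ≤ 0.174114244 := by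
  have e := Real.sin_two_mul (7/80); norm_num at e; rw [e]
  obtain ⟨a1,a2⟩ := Bs_7_80; obtain ⟨b1,b2⟩ := Bc_7_80
  constructor <;> nlinarith [a1,a2,b1,b2]

lemma Bc_7_40 : (0.984704639:ℝ) ≤ Real.cos (7/40) ∧ Real.cos (7/40) ≤ 0.984728979 := by
  have e := Real.cos_two_mul (7/80); norm_num at e; rw [e]
  obtain ⟨b1,b2⟩ := Bc_7_80
  constructor <;> nlinarith [b1,b2]

lemma Bs_7_20 : (0.342876140:ℝ) ≤ Real.sin (7/20) ∧ Real.sin (7/20) ≤ 0.342910684 := by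
  have e := Real.sin_two_mul (7/40); norm_num at e; rw [e]
  obtain ⟨a1,a2⟩ := Bs_7_40; obtain ⟨b1,b2⟩ := Bc_7_40
  constructor <;> nlinarith [a1,a2,b1,b2]

lemma Bc_7_20 : (0.939286452:ℝ) ≤ Real.cos (7/20) ∧ Real.cos (7/20) ≤ 0.939382325 := by
  have e := Real.cos_two_mul (7/40); norm_num at e; rw [e]
  obtain ⟨b1,b2⟩ := Bc_7_40
  constructor <;> nlinarith [b1,b2]

lemma Bs_7_10 : (0.644117826:ℝ) ≤ Real.sin (7/10) ∧ Real.sin (7/10) ≤ 0.644248472 := by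
  have e := Real.sin_two_mul (7/20); norm_num at e; rw [e]
  obtain ⟨a1,a2⟩ := Bs_7_20; obtain ⟨b1,b2⟩ := Bc_7_20
  constructor <;> nlinarith [a1,a2,b1,b2]

lemma Bc_7_10 : (0.764518077:ℝ) ≤ Real.cos (7/10) ∧ Real.cos (7/10) ≤ 0.764878306 := by
  have e := Real.cos_two_mul (7/20); norm_num at e; rw [e]
  obtain ⟨b1,b2⟩ := Bc_7_20
  constructor <;> nlinarith [b1,b2]

lemma Bs_1_4 : (0.247372515:ℝ) ≤ Real.sin (1/4) ∧ Real.sin (1/4) ≤ 0.247429324 := by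
  have e := Real.sin_two_mul (1/8); norm_num at e; rw [e]
  obtain ⟨a1,a2⟩ := Bs_1_8; obtain ⟨b1,b2⟩ := Bc_1_8
  constructor <;> nlinarith [a1,a2,b1,b2]

lemma Bc_1_4 : (0.968821604:ℝ) ≤ Real.cos (1/4) ∧ Real.cos (1/4) ≤ 0.968922538 := by
  have e := Real.cos_two_mul (1/8); norm_num at e; rw [e]
  obtain ⟨b1,b2⟩ := Bc_1_8
  constructor <;> nlinarith [b1,b2]

lemma Bs_1_2 : (0.479319673:ℝ) ≤ Real.sin (1/2) ∧ Real.sin (1/2) ≤ 0.479479698 := by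
  have e := Real.sin_two_mul (1/4); norm_num at e; rw [e]
  obtain ⟨a1,a2⟩ := Bs_1_4; obtain ⟨b1,b2⟩ := Bc_1_4
  constructor <;> nlinarith [a1,a2,b1,b2]

lemma Bc_1_2 : (0.877230600:ℝ) ≤ Real.cos (1/2) ∧ Real.cos (1/2) ≤ 0.877621770 := by
  have e := Real.cos_two_mul (1/4); norm_num at e; rw [e]
  obtain ⟨b1,b2⟩ := Bc_1_4
  constructor <;> nlinarith [b1,b2]

lemma Bs_1 : (0.840947768:ℝ) ≤ Real.sin (1) ∧ Real.sin (1) ≤ 0.841603643 := by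
  have e := Real.sin_two_mul (1/2); norm_num at e; rw [e]
  obtain ⟨a1,a2⟩ := Bs_1_2; obtain ⟨b1,b2⟩ := Bc_1_2
  constructor <;> nlinarith [a1,a2,b1,b2]

lemma Bc_1 : (0.539067051:ℝ) ≤ Real.cos (1) ∧ Real.cos (1) ≤ 0.540439943 := by
  have e := Real.cos_two_mul (1/2); norm_num at e; rw [e]
  obtain ⟨b1,b2⟩ := Bc_1_2
  constructor <;> nlinarith [b1,b2]

lemma Ppsi0 : (0.703352924:ℝ) ≤ Real.sin (13/10) * Real.cos (3/4) ∧ Real.sin (13/10) * Real.cos (3/4) ≤ 0.705347506 := by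
  obtain ⟨a1,a2⟩ := Bs_13_10; obtain ⟨b1,b2⟩ := Bc_3_4
  constructor <;> nlinarith [a1,a2,b1,b2]

lemma Ppsi1 : (0.193338063:ℝ) ≤ Real.cos (13/10) * Real.cos (3/4) ∧ Real.cos (13/10) * Real.cos (3/4) ≤ 0.195992671 := by
  obtain ⟨a1,a2⟩ := Bc_13_10; obtain ⟨b1,b2⟩ := Bc_3_4
  constructor <;> nlinarith [a1,a2,b1,b2]

lemma Pphi0 : (0.347222696:ℝ) ≤ Real.sin (7/10) * Real.cos (1) ∧ Real.sin (7/10) * Real.cos (1) ≤ 0.348177608 := by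
  obtain ⟨a1,a2⟩ := Bs_7_10; obtain ⟨b1,b2⟩ := Bc_1
  constructor <;> nlinarith [a1,a2,b1,b2]

lemma Pphi1 : (0.412126505:ℝ) ≤ Real.cos (7/10) * Real.cos (1) ∧ Real.cos (7/10) * Real.cos (1) ≤ 0.413370789 := by
  obtain ⟨a1,a2⟩ := Bc_7_10; obtain ⟨b1,b2⟩ := Bc_1
  constructor <;> nlinarith [a1,a2,b1,b2]

lemma Cpsi0 : (0.494705335:ℝ) ≤ (Real.sin (13/10) * Real.cos (3/4)) ^ 2 ∧ (Real.sin (13/10) * Real.cos (3/4)) ^ 2 ≤ 0.497515105 := by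
  obtain ⟨a1,a2⟩ := Ppsi0
  constructor <;> nlinarith [a1,a2]

lemma Cpsi1 : (0.037379606:ℝ) ≤ (Real.cos (13/10) * Real.cos (3/4)) ^ 2 ∧ (Real.cos (13/10) * Real.cos (3/4)) ^ 2 ≤ 0.038413128 := by
  obtain ⟨a1,a2⟩ := Ppsi1
  constructor <;> nlinarith [a1,a2]

lemma Cpsi2 : (0.464443663:ℝ) ≤ Real.sin (3/4) ^ 2 ∧ Real.sin (3/4) ^ 2 ≤ 0.464687155 := by
  obtain ⟨a1,a2⟩ := Bs_3_4
  constructor <;> nlinarith [a1,a2]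

lemma Cphi0 : (0.120563600:ℝ) ≤ (Real.sin (7/10) * Real.cos (1)) ^ 2 ∧ (Real.sin (7/10) * Real.cos (1)) ^ 2 ≤ 0.121227647 := by
  obtain ⟨a1,a2⟩ := Pphi0
  constructor <;> nlinarith [a1,a2]

lemma Cphi1 : (0.169848256:ℝ) ≤ (Real.cos (7/10) * Real.cos (1)) ^ 2 ∧ (Real.cos (7/10) * Real.cos (1)) ^ 2 ≤ 0.170875410 := by
  obtain ⟨a1,a2⟩ := Pphi1
  constructor <;> nlinarith [a1,a2]

lemma Cphi2 : (0.707193148:ℝ) ≤ Real.sin (1) ^ 2 ∧ Real.sin (1) ^ 2 ≤ 0.708296692 := by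
  obtain ⟨a1,a2⟩ := Bs_1
  constructor <;> nlinarith [a1,a2]

lemma Lub0 : Real.log (0.497515105:ℝ) ≤ -0.69812736030000 := by
  have hexp : (0.995030210:ℝ) ≤ Real.exp (-0.0049801800) := by
    have h := Real.exp_bound (x := -0.0049801800) (by rw [abs_le]; norm_num) (n := 6) (by norm_num)
    rw [abs_le, show |(-0.0049801800:ℝ)| = 0.0049801800 from by rw [abs_of_neg] <;> norm_num] at h
    simp [Finset.sum_range_succ, Nat.factorial] at h
    norm_num at h ⊢
    linarith [h.1, h.2]
  have hlm : Real.log (0.995030210:ℝ) ≤ -0.0049801800 := (Real.log_le_iff_le_exp (by norm_num)).2 hexp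
  have hq : Real.log (0.497515105:ℝ) = Real.log (0.995030210) - 1 * Real.log 2 := by
    rw [show (0.497515105:ℝ) = 0.995030210 / 2^(1:ℕ) by norm_num,
      Real.log_div (by norm_num) (by norm_num), Real.log_pow]
    norm_num
  have h2 := Real.log_two_gt_d9
  rw [hq]; linarith [hlm, h2]

lemma Lub1 : Real.log (0.038413128:ℝ) ≤ -3.25935400150000 := by
  have hexp : (1.229220096:ℝ) ≤ Real.exp (0.2063819000) := by
    have h := Real.exp_bound (x := 0.2063819000) (by rw [abs_le]; norm_num) (n := 6) (by norm_num)
    rw [abs_le, show |(0.2063819000:ℝ)| = 0.2063819000 from abs_of_nonneg (by norm_num)] at h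
    simp [Finset.sum_range_succ, Nat.factorial] at h
    norm_num at h ⊢
    linarith [h.1, h.2]
  have hlm : Real.log (1.229220096:ℝ) ≤ 0.2063819000 := (Real.log_le_iff_le_exp (by norm_num)).2 hexp
  have hq : Real.log (0.038413128:ℝ) = Real.log (1.229220096) - 5 * Real.log 2 := by
    rw [show (0.038413128:ℝ) = 1.229220096 / 2^(5:ℕ) by norm_num,
      Real.log_div (by norm_num) (by norm_num), Real.log_pow]
    norm_num
  have h2 := Real.log_two_gt_d9
  rw [hq]; linarith [hlm, h2]

lemma Lub2 : Real.log (0.464687155:ℝ) ≤ -0.76638888430000 := by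
  have hexp : (0.929374310:ℝ) ≤ Real.exp (-0.0732417040) := by
    have h := Real.exp_bound (x := -0.0732417040) (by rw [abs_le]; norm_num) (n := 6) (by norm_num)
    rw [abs_le, show |(-0.0732417040:ℝ)| = 0.0732417040 from by rw [abs_of_neg] <;> norm_num] at h
    simp [Finset.sum_range_succ, Nat.factorial] at h
    norm_num at h ⊢
    linarith [h.1, h.2]
  have hlm : Real.log (0.929374310:ℝ) ≤ -0.0732417040 := (Real.log_le_iff_le_exp (by norm_num)).2 hexp
  have hq : Real.log (0.464687155:ℝ) = Real.log (0.929374310) - 1 * Real.log 2 := by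
    rw [show (0.464687155:ℝ) = 0.929374310 / 2^(1:ℕ) by norm_num,
      Real.log_div (by norm_num) (by norm_num), Real.log_pow]
    norm_num
  have h2 := Real.log_two_gt_d9
  rw [hq]; linarith [hlm, h2]

lemma Llb0 : (-2.11557986540000:ℝ) ≤ Real.log (0.120563600:ℝ) := by
  have hexp : Real.exp (-0.0361383230) ≤ (0.964508800:ℝ) := by
    have h := Real.exp_bound (x := -0.0361383230) (by rw [abs_le]; norm_num) (n := 6) (by norm_num)
    rw [abs_le, show |(-0.0361383230:ℝ)| = 0.0361383230 from by rw [abs_of_neg] <;> norm_num] at h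
    simp [Finset.sum_range_succ, Nat.factorial] at h
    norm_num at h ⊢
    linarith [h.1, h.2]
  have hlm : (-0.0361383230:ℝ) ≤ Real.log (0.964508800) := (Real.le_log_iff_exp_le (by norm_num)).2 hexp
  have hq : Real.log (0.120563600:ℝ) = Real.log (0.964508800) - 3 * Real.log 2 := by
    rw [show (0.120563600:ℝ) = 0.964508800 / 2^(3:ℕ) by norm_num,
      Real.log_div (by norm_num) (by norm_num), Real.log_pow]
    norm_num
  have h2 := Real.log_two_lt_d9
  rw [hq]; linarith [hlm, h2]

lemma Llb1 : (-1.77285185340000:ℝ) ≤ Real.log (0.169848256:ℝ) := by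
  have hexp : Real.exp (0.3065896890) ≤ (1.358786048:ℝ) := by
    have h := Real.exp_bound (x := 0.3065896890) (by rw [abs_le]; norm_num) (n := 6) (by norm_num)
    rw [abs_le, show |(0.3065896890:ℝ)| = 0.3065896890 from abs_of_nonneg (by norm_num)] at h
    simp [Finset.sum_range_succ, Nat.factorial] at h
    norm_num at h ⊢
    linarith [h.1, h.2]
  have hlm : (0.3065896890:ℝ) ≤ Real.log (1.358786048) := (Real.le_log_iff_exp_le (by norm_num)).2 hexp
  have hq : Real.log (0.169848256:ℝ) = Real.log (1.358786048) - 3 * Real.log 2 := by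
    rw [show (0.169848256:ℝ) = 1.358786048 / 2^(3:ℕ) by norm_num,
      Real.log_div (by norm_num) (by norm_num), Real.log_pow]
    norm_num
  have h2 := Real.log_two_lt_d9
  rw [hq]; linarith [hlm, h2]

lemma Llb2 : (-0.34645345700000:ℝ) ≤ Real.log (0.707193148:ℝ) := by
  have hexp : Real.exp (-0.3464534570) ≤ (0.707193148:ℝ) := by
    have h := Real.exp_bound (x := -0.3464534570) (by rw [abs_le]; norm_num) (n := 6) (by norm_num)
    rw [abs_le, show |(-0.3464534570:ℝ)| = 0.3464534570 from by rw [abs_of_neg] <;> norm_num] at h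
    simp [Finset.sum_range_succ, Nat.factorial] at h
    norm_num at h ⊢
    linarith [h.1, h.2]
  have hlm : (-0.3464534570:ℝ) ≤ Real.log (0.707193148) := (Real.le_log_iff_exp_le (by norm_num)).2 hexp
  linarith [hlm]

/-- There exist two-qutrit pure states `|ψ⟩ = |Ψ(1.3, 0.75)⟩` and `|φ⟩ = |Ψ(0.7, 1)⟩` with
`E(|ψ⟩) ≥ E(|φ⟩)` but `E_N(|ψ⟩) < E_N(|φ⟩)`: entanglement entropy and logarithmic
negativity order states differently. -/
theorem entropy_negativity_different_ordering :
    Epure (schmidtSq 1.3 0.75) ≥ Epure (schmidtSq 0.7 1) ∧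
    ENpure (schmidtSq 1.3 0.75) < ENpure (schmidtSq 0.7 1) := by
  rw [show (1.3:ℝ) = 13/10 by norm_num, show (0.75:ℝ) = 3/4 by norm_num,
    show (0.7:ℝ) = 7/10 by norm_num]
  constructor
  · simp only [Epure, schmidtSq, Fin.sum_univ_three, Matrix.cons_val_zero, Matrix.cons_val_one,
      Matrix.head_cons, Matrix.cons_val_two, Matrix.tail_cons]
    have T0 := term_lb (by norm_num) Cpsi0.1 Cpsi0.2 Lub0 (by norm_num)
    have T1 := term_lb (by norm_num) Cpsi1.1 Cpsi1.2 Lub1 (by norm_num)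
    have T2 := term_lb (by norm_num) Cpsi2.1 Cpsi2.2 Lub2 (by norm_num)
    have U0 := term_ub (by norm_num) Cphi0.1 Cphi0.2 (by norm_num) Llb0 (by norm_num)
    have U1 := term_ub (by norm_num) Cphi1.1 Cphi1.2 (by norm_num) Llb1 (by norm_num)
    have U2 := term_ub (by norm_num) Cphi2.1 Cphi2.2 (by norm_num) Llb2 (by norm_num)
    have hfin : -((0.121227647:ℝ)*(-2.11557986540000)) / 0.6931471803
        + -((0.170875410:ℝ)*(-1.77285185340000)) / 0.6931471803
        + -((0.708296692:ℝ)*(-0.34645345700000)) / 0.6931471803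
        ≤ -((0.494705335:ℝ)*(-0.69812736030000)) / 0.6931471808
        + -((0.037379606:ℝ)*(-3.25935400150000)) / 0.6931471808
        + -((0.464443663:ℝ)*(-0.76638888430000)) / 0.6931471808 := by norm_num
    linarith [T0,T1,T2,U0,U1,U2,hfin]
  · have q1 : 0 ≤ Real.sin (13/10) * Real.cos (3/4) := le_trans (by norm_num) Ppsi0.1
    have q2 : 0 ≤ Real.cos (13/10) * Real.cos (3/4) := le_trans (by norm_num) Ppsi1.1
    have q3 : 0 ≤ Real.sin (3/4) := le_trans (by norm_num) Bs_3_4.1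
    have q4 : 0 ≤ Real.sin (7/10) * Real.cos (1) := le_trans (by norm_num) Pphi0.1
    have q5 : 0 ≤ Real.cos (7/10) * Real.cos (1) := le_trans (by norm_num) Pphi1.1
    have q6 : 0 ≤ Real.sin (1:ℝ) := le_trans (by norm_num) Bs_1.1
    simp only [ENpure, schmidtSq, Fin.sum_univ_three, Matrix.cons_val_zero, Matrix.cons_val_one,
      Matrix.head_cons, Matrix.cons_val_two, Matrix.tail_cons]
    rw [Real.sqrt_sq q1, Real.sqrt_sq q2, Real.sqrt_sq q3, Real.sqrt_sq q4, Real.sqrt_sq q5,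
      Real.sqrt_sq q6]
    have hlt : Real.sin (13/10) * Real.cos (3/4) + Real.cos (13/10) * Real.cos (3/4) + Real.sin (3/4)
        < Real.sin (7/10) * Real.cos (1) + Real.cos (7/10) * Real.cos (1) + Real.sin (1:ℝ) := by
      linarith [Ppsi0.2, Ppsi1.2, Bs_3_4.2, Pphi0.1, Pphi1.1, Bs_1.1]
    have hpos : 0 < Real.sin (13/10) * Real.cos (3/4) + Real.cos (13/10) * Real.cos (3/4) + Real.sin (3/4) := by
      linarith [Ppsi0.1, Ppsi1.1, Bs_3_4.1]
    have := Real.logb_lt_logb (b := 2) (by norm_num) hpos hlt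
    linarith [this]
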